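/- arXiv:1006.1715 — 2 statements merged into one kernel-verified Lean document; each statement's English description precedes it below -/
import Mathlib

section
/- Let n, l₁, …, l_k be positive natural numbers and let d = gcd(l₁, …, l_k). Then the least common multiple of the numbers nd/gcd(nd, l₁), …, nd/gcd(nd, l_k) equals n. -/
/-! Each term `n d / gcd(n d, lᵢ)` divides `n` because `d` divides `gcd(n d, lᵢ)`. Conversely, if
`L` is the lcm of the terms, then `n d ∣ L gcd(n d, lᵢ) ∣ L lᵢ` for every `i`, so `n d` divides
`gcd_i (L lᵢ) = L d`, and cancelling `d` gives `n ∣ L`. -/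

theorem List.foldr_gcd_eq_gcd_coe (l : List ℕ) : l.foldr Nat.gcd 0 = (l : Multiset ℕ).gcd := by
  induction l with
  | nil => rfl
  | cons a t ih => rw [List.foldr_cons, ih, ← Multiset.cons_coe]; rfl

theorem List.foldr_lcm_eq_lcm_coe (l : List ℕ) : l.foldr Nat.lcm 1 = (l : Multiset ℕ).lcm := by
  induction l with
  | nil => rfl
  | cons a t ih => rw [List.foldr_cons, ih, ← Multiset.cons_coe]; rfl

theorem Nat.mul_div_gcd_dvd_of_dvd (n : ℕ) {d x : ℕ} (hd : d ≠ 0) (hdx : d ∣ x) :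
    n * d / Nat.gcd (n * d) x ∣ n := by
  rcases Nat.eq_zero_or_pos n with rfl | hn
  · simp
  have hdg : d ∣ Nat.gcd (n * d) x := Nat.dvd_gcd (Nat.dvd_mul_left d n) hdx
  have hg : 0 < Nat.gcd (n * d) x :=
    Nat.gcd_pos_of_pos_left x (Nat.mul_pos hn (Nat.pos_of_ne_zero hd))
  rw [Nat.div_dvd_iff_dvd_mul (Nat.gcd_dvd_left _ _) hg, Nat.mul_comm _ n]
  exact Nat.mul_dvd_mul_left n hdg

theorem Nat.dvd_mul_of_div_gcd_dvd {m x L : ℕ} (h : m / Nat.gcd m x ∣ L) : m ∣ L * x :=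
  calc m = m / Nat.gcd m x * Nat.gcd m x := (Nat.div_mul_cancel (Nat.gcd_dvd_left m x)).symm
    _ ∣ L * x := Nat.mul_dvd_mul h (Nat.gcd_dvd_right m x)

theorem Multiset.lcm_map_mul_gcd_div_gcd (n : ℕ) (s : Multiset ℕ) (hs : s.gcd ≠ 0) :
    (s.map fun x => n * s.gcd / Nat.gcd (n * s.gcd) x).lcm = n := by
  set L := (s.map fun x => n * s.gcd / Nat.gcd (n * s.gcd) x).lcm
  apply Nat.dvd_antisymm
  · exact Multiset.lcm_dvd.2 <| Multiset.forall_mem_map_iff.2 fun x hx =>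
      Nat.mul_div_gcd_dvd_of_dvd n hs (Multiset.gcd_dvd hx)
  · have hnd : n * s.gcd ∣ L * s.gcd := by
      rw [← normalize_eq L, ← Multiset.gcd_map_mul]
      exact Multiset.dvd_gcd.2 <| Multiset.forall_mem_map_iff.2 fun x hx =>
        Nat.dvd_mul_of_div_gcd_dvd (Multiset.dvd_lcm (Multiset.mem_map_of_mem _ hx))
    exact Nat.dvd_of_mul_dvd_mul_right (Nat.pos_of_ne_zero hs) hnd

theorem stmt_0_general (n : ℕ) (l : List ℕ) (hl : l ≠ [])
    (hpos : ∀ x ∈ l, 0 < x) (d : ℕ) (hd : d = l.foldr Nat.gcd 0) :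
    (l.map (fun x => n * d / Nat.gcd (n * d) x)).foldr Nat.lcm 1 = n := by
  rw [List.foldr_gcd_eq_gcd_coe] at hd
  obtain ⟨x, hx⟩ := List.exists_mem_of_ne_nil l hl
  have hd0 : (l : Multiset ℕ).gcd ≠ 0 :=
    (Multiset.gcd_ne_zero_iff _).2 ⟨x, hx, (hpos x hx).ne'⟩
  rw [List.foldr_lcm_eq_lcm_coe, ← Multiset.map_coe, hd]
  exact Multiset.lcm_map_mul_gcd_div_gcd n l hd0

/-- Lemma 3: for positive `n` and positive `l₁, …, l_k` with gcd `d`, the lcm of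
the numbers `n*d / gcd (n*d) lᵢ` equals `n`. -/
theorem stmt_0 (n : ℕ) (hn : 0 < n) (l : List ℕ) (hl : l ≠ [])
    (hpos : ∀ x ∈ l, 0 < x) (d : ℕ) (hd : d = l.foldr Nat.gcd 0) :
    (l.map (fun x => n * d / Nat.gcd (n * d) x)).foldr Nat.lcm 1 = n :=
  stmt_0_general n l hl hpos d hd
end

section
/- Let n, d be positive integers and l₁, …, l_k positive integers with gcd(l₁, …, l_k) = d. Then for each i, the number nd/gcd(nd, l_i) divides n, and every prime power p^m exactly dividing n divides at least one of the numbers nd/gcd(nd, l_i). -/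
lemma foldr_gcd_dvd : ∀ (l : List ℕ), ∀ x ∈ l, l.foldr Nat.gcd 0 ∣ x
  | a :: t, x, hx => by
    rcases List.mem_cons.mp hx with h | h
    · simpa [h] using Nat.gcd_dvd_left a (t.foldr Nat.gcd 0)
    · exact (Nat.gcd_dvd_right a (t.foldr Nat.gcd 0)).trans (foldr_gcd_dvd t x h)

lemma foldr_gcd_pos : ∀ (l : List ℕ), l ≠ [] → (∀ x ∈ l, 0 < x) →
    0 < l.foldr Nat.gcd 0
  | a :: t, _, hpos => by
    have ha : 0 < a := hpos a (by simp)
    simp only [List.foldr_cons]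
    exact Nat.gcd_pos_of_pos_left _ ha

lemma exists_min_fact (p : ℕ) : ∀ (l : List ℕ), l ≠ [] → (∀ x ∈ l, 0 < x) →
    ∃ x ∈ l, (l.foldr Nat.gcd 0).factorization p = x.factorization p
  | [a], _, hpos => ⟨a, by simp⟩
  | a :: b :: t, _, hpos => by
    obtain ⟨x, hx, hxf⟩ := exists_min_fact p (b :: t) (by simp)
      (fun y hy => hpos y (List.mem_cons_of_mem a hy))
    have ha : a ≠ 0 := (hpos a (by simp)).ne'
    have hg : (b :: t).foldr Nat.gcd 0 ≠ 0 :=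
      (foldr_gcd_pos (b :: t) (by simp) (fun y hy => hpos y (List.mem_cons_of_mem a hy))).ne'
    have : ((a :: b :: t).foldr Nat.gcd 0).factorization p =
        min (a.factorization p) (((b :: t).foldr Nat.gcd 0).factorization p) := by
      simp only [List.foldr_cons] at *
      rw [Nat.factorization_gcd ha hg]
      simp [Finsupp.inf_apply]
    rcases le_total (a.factorization p) (((b :: t).foldr Nat.gcd 0).factorization p) with h | h
    · exact ⟨a, by simp, by omega⟩
    · exact ⟨x, List.mem_cons_of_mem a hx, by omega⟩

/-- Refined form of Lemma 3: with `d = gcd (l₁, …, l_k)`, each `n*d / gcd (n*d) lᵢ` divides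
`n`, and for every prime power `p^m` exactly dividing `n` there is an index `i` with
`p^m ∣ n*d / gcd (n*d) lᵢ`. -/
theorem stmt_17 (n d : ℕ) (hn : 0 < n) (hd : 0 < d) (l : List ℕ) (hl : l ≠ [])
    (hpos : ∀ x ∈ l, 0 < x) (hgcd : l.foldr Nat.gcd 0 = d) :
    (∀ x ∈ l, n * d / Nat.gcd (n * d) x ∣ n) ∧
      ∀ p m : ℕ, p.Prime → p ^ m ∣ n → ¬ p ^ (m + 1) ∣ n →
        ∃ x ∈ l, p ^ m ∣ n * d / Nat.gcd (n * d) x := by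
  constructor
  · intro x hx
    have hdx : d ∣ x := hgcd ▸ foldr_gcd_dvd l x hx
    have hdg : d ∣ Nat.gcd (n * d) x := Nat.dvd_gcd (dvd_mul_left d n) hdx
    obtain ⟨t, ht⟩ := hdg
    have hgnd : Nat.gcd (n * d) x ∣ n * d := Nat.gcd_dvd_left _ _
    have htn : t ∣ n := by
      rcases hgnd with ⟨s, hs⟩
      refine ⟨s, ?_⟩
      have : d * (t * s) = d * n := by rw [← mul_assoc, ← ht, ← hs]; ring
      exact (Nat.eq_of_mul_eq_mul_left hd this).symm
    have := Nat.div_dvd_of_dvd htn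
    rw [ht, ← Nat.div_div_eq_div_mul, mul_comm n d, Nat.mul_div_cancel_left n hd]
    exact this
  · intro p m hp hm hm1
    obtain ⟨x, hx, hxf⟩ := exists_min_fact p l hl hpos
    rw [hgcd] at hxf
    refine ⟨x, hx, ?_⟩
    have hx0 : x ≠ 0 := (hpos x hx).ne'
    have hnd0 : n * d ≠ 0 := by positivity
    have hgnd : Nat.gcd (n * d) x ∣ n * d := Nat.gcd_dvd_left _ _
    have hq0 : n * d / Nat.gcd (n * d) x ≠ 0 :=
      (Nat.div_pos (Nat.le_of_dvd (by positivity) hgnd)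
        (Nat.gcd_pos_of_pos_left _ (by positivity))).ne'
    rw [(Nat.Prime.pow_dvd_iff_le_factorization hp hq0)]
    have hvn : n.factorization p = m := by
      have h1 : m ≤ n.factorization p :=
        (Nat.Prime.pow_dvd_iff_le_factorization hp hn.ne').mp hm
      have h2 : ¬ (m + 1 ≤ n.factorization p) := fun h =>
        hm1 ((Nat.Prime.pow_dvd_iff_le_factorization hp hn.ne').mpr h)
      omega
    have hdiv : (n * d / Nat.gcd (n * d) x).factorization p =
        (n * d).factorization p - (Nat.gcd (n * d) x).factorization p := by
      rw [Nat.factorization_div hgnd]; simp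
    have hmul : (n * d).factorization p = n.factorization p + d.factorization p := by
      rw [Nat.factorization_mul hn.ne' hd.ne']; simp
    have hgf : (Nat.gcd (n * d) x).factorization p =
        min ((n * d).factorization p) (x.factorization p) := by
      rw [Nat.factorization_gcd hnd0 hx0]; simp [Finsupp.inf_apply]
    omega
end
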